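/- arXiv:1205.1952 — 3 statements merged into one kernel-verified Lean document; each statement's English description precedes it below -/
import Mathlib

section
/- Let ζ be a primitive (2k+1)-th root of unity in a field K (or in ℂ), and let y be a nonzero element of K with s = y + y⁻¹. Then (−1)^k + Σ_{i=1}^{k} (−1)^{k−i}(y^i + y^{-i}) = Π_{i=1}^{k} (s + ζ^i + ζ^{-i}). -/
/-!
Multiplying by `y ^ k` turns the left side into `∑_{j=0}^{2k} (-y)^j`, which equals
`∏_{j=1}^{2k} (-y - ζ^j)` because `ζ, …, ζ^{2k}` are the roots of `1 + X + ⋯ + X^{2k}`.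
Pairing `ζ^i` with `ζ^{2k+1-i} = ζ^{-i}` gives
`(-y - ζ^i)(-y - ζ^{-i}) = y (y + y⁻¹ + ζ^i + ζ^{-i})`, which is `y ^ k` times the right side.
-/

open Finset Polynomial

namespace Finset

variable {M : Type*}

theorem sum_range_two_mul_add_one_eq [AddCommMonoid M] (f : ℕ → M) (k : ℕ) :
    ∑ j ∈ range (2 * k + 1), f j = f k + ∑ i ∈ Icc 1 k, (f (k - i) + f (k + i)) := by
  have hlow : ∑ i ∈ Icc 1 k, f (k - i) = ∑ j ∈ range k, f j := by
    refine sum_nbij' (k - ·) (k - ·) ?_ ?_ ?_ ?_ fun _ _ ↦ rfl <;>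
      intro a ha <;> simp only [mem_Icc, mem_range] at ha ⊢ <;> omega
  have hhigh : ∑ i ∈ Icc 1 k, f (k + i) = ∑ j ∈ Ico (k + 1) (2 * k + 1), f j := by
    refine sum_nbij' (k + ·) (fun j : ℕ ↦ j - k) ?_ ?_ ?_ ?_ fun _ _ ↦ rfl <;>
      intro a ha <;> simp only [mem_Icc, mem_Ico] at ha ⊢ <;> omega
  rw [sum_add_distrib, hlow, hhigh, ← sum_range_add_sum_Ico f (by omega : k + 1 ≤ 2 * k + 1),
    sum_range_succ]
  abel

theorem prod_Icc_two_mul_eq [CommMonoid M] (f : ℕ → M) (k : ℕ) :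
    ∏ j ∈ Icc 1 (2 * k), f j = ∏ i ∈ Icc 1 k, (f i * f (2 * k + 1 - i)) := by
  have hhigh : ∏ i ∈ Icc 1 k, f (2 * k + 1 - i) = ∏ j ∈ Ico (k + 1) (2 * k + 1), f j := by
    refine prod_nbij' (2 * k + 1 - ·) (2 * k + 1 - ·) ?_ ?_ ?_ ?_ fun _ _ ↦ rfl <;>
      intro a ha <;> simp only [mem_Icc, mem_Ico] at ha ⊢ <;> omega
  rw [prod_mul_distrib, hhigh, ← Ico_add_one_right_eq_Icc, ← Ico_add_one_right_eq_Icc,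
    prod_Ico_consecutive _ (by omega) (by omega)]

end Finset

namespace IsPrimitiveRoot

variable {R : Type*} [CommRing R] [IsDomain R]

theorem prod_Icc_sub_pow_eq_geom_sum {n : ℕ} {μ : R} (hμ : IsPrimitiveRoot μ (n + 1)) (x : R) :
    ∏ j ∈ Icc 1 n, (x - μ ^ j) = ∑ j ∈ range (n + 1), x ^ j := by
  have h := X_pow_sub_C_eq_prod hμ n.zero_lt_succ (one_pow (n + 1))
  rw [C_1, ← mul_geom_sum, prod_range_succ', pow_zero, mul_one, mul_comm, eq_comm] at h
  replace h := congrArg (eval x) (mul_right_cancel₀ (X_sub_C_ne_zero 1) h)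
  simp only [mul_one, eval_prod, eval_sub, eval_X, eval_C, eval_geom_sum] at h
  rw [← h, range_eq_Ico, prod_Ico_add' (fun j ↦ x - μ ^ j)]
  rfl

end IsPrimitiveRoot

theorem pow_mul_neg_one_pow_sub_mul_add_inv {K : Type*} [Field K] {y : K} (hy : y ≠ 0)
    {i k : ℕ} (hik : i ≤ k) :
    y ^ k * ((-1) ^ (k - i) * (y ^ i + (y ^ i)⁻¹)) = (-y) ^ (k - i) + (-y) ^ (k + i) := by
  obtain ⟨j, rfl⟩ := Nat.exists_eq_add_of_le hik
  rw [Nat.add_sub_cancel_left, show i + j + i = j + 2 * i by ring, neg_pow, neg_pow,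
    pow_add _ j, pow_mul]
  field_simp
  ring

open Finset in
theorem sum_eq_prod_root_of_unity_general {K : Type*} [Field K] (k : ℕ)
    (ζ : K) (hζ : IsPrimitiveRoot ζ (2 * k + 1)) (y : K) (hy : y ≠ 0) (s : K)
    (hs : s = y + y⁻¹) :
    (-1 : K) ^ k + ∑ i ∈ Icc 1 k, (-1 : K) ^ (k - i) * (y ^ i + (y ^ i)⁻¹) =
      ∏ i ∈ Icc 1 k, (s + ζ ^ i + (ζ ^ i)⁻¹) := by
  subst hs
  have hζ0 : ζ ≠ 0 := hζ.ne_zero (by omega)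
  apply mul_left_cancel₀ (pow_ne_zero k hy)
  calc y ^ k * ((-1) ^ k + ∑ i ∈ Icc 1 k, (-1) ^ (k - i) * (y ^ i + (y ^ i)⁻¹))
      = (-y) ^ k + ∑ i ∈ Icc 1 k, ((-y) ^ (k - i) + (-y) ^ (k + i)) := by
        rw [mul_add, mul_sum, ← mul_pow, mul_neg_one]
        congr 1
        exact sum_congr rfl fun i hi ↦ pow_mul_neg_one_pow_sub_mul_add_inv hy (mem_Icc.1 hi).2
    _ = ∑ j ∈ range (2 * k + 1), (-y) ^ j := (sum_range_two_mul_add_one_eq _ k).symm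
    _ = ∏ j ∈ Icc 1 (2 * k), (-y - ζ ^ j) := (hζ.prod_Icc_sub_pow_eq_geom_sum (-y)).symm
    _ = ∏ i ∈ Icc 1 k, ((-y - ζ ^ i) * (-y - ζ ^ (2 * k + 1 - i))) := prod_Icc_two_mul_eq _ k
    _ = ∏ i ∈ Icc 1 k, y * (y + y⁻¹ + ζ ^ i + (ζ ^ i)⁻¹) := by
        refine prod_congr rfl fun i hi ↦ ?_
        rw [pow_sub₀ ζ hζ0 (by grind), hζ.pow_eq_one, one_mul]
        field_simp
        ring
    _ = y ^ k * ∏ i ∈ Icc 1 k, (y + y⁻¹ + ζ ^ i + (ζ ^ i)⁻¹) := by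
        rw [← pow_card_mul_prod, Nat.card_Icc, Nat.add_sub_cancel]

open Finset in
theorem sum_eq_prod_root_of_unity {K : Type*} [Field K] (k : ℕ) (hk : 1 ≤ k)
    (ζ : K) (hζ : IsPrimitiveRoot ζ (2 * k + 1)) (y : K) (hy : y ≠ 0) (s : K)
    (hs : s = y + y⁻¹) :
    (-1 : K) ^ k + ∑ i ∈ Icc 1 k, (-1 : K) ^ (k - i) * (y ^ i + (y ^ i)⁻¹) =
      ∏ i ∈ Icc 1 k, (s + ζ ^ i + (ζ ^ i)⁻¹) :=
  sum_eq_prod_root_of_unity_general k ζ hζ y hy s hs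
end

section
/- Let x, y ∈ SL₂(K) for a field K and let c = [x⁻², y⁻¹] = x⁻²y⁻¹x²y be the commutator. Then Tr(c) = s⁴ − s³tu + s²t² + s²u² − 4s² + 2, where s = Tr(x), t = Tr(y), u = Tr(xy). -/
/-!
For `A ∈ SL₂(R)` the adjugate formula for the inverse reads `A⁻¹ = tr A - A`; equivalently
`A² = tr A · A - 1` (Cayley–Hamilton). With these, traces of words in `A, B` reduce to polynomials
in `tr A`, `tr B`, `tr AB`, which gives Fricke's formula
`tr [A, B] = (tr A)² + (tr B)² + (tr AB)² - tr A · tr B · tr AB - 2`.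
Apply it to `A = x⁻²`, `B = y⁻¹`, where `tr A = tr x² = s² - 2`, `tr B = t` and
`tr AB = tr x²y = su - t`.
-/

open Matrix
open scoped MatrixGroups

namespace Matrix.SpecialLinearGroup

theorem trace_coe_mul_comm {n R : Type*} [Fintype n] [DecidableEq n] [CommRing R]
    (A B : SpecialLinearGroup n R) :
    trace ((A * B : SpecialLinearGroup n R) : Matrix n n R) =
      trace ((B * A : SpecialLinearGroup n R) : Matrix n n R) := by
  rw [coe_mul, coe_mul, trace_mul_comm]

variable {R : Type*} [CommRing R] (A B : SL(2, R))

local notation "tr " A:max => Matrix.trace ((A : SL(2, R)) : Matrix (Fin 2) (Fin 2) R)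

theorem coe_inv_fin_two_eq_trace_smul_sub :
    ((A⁻¹ : SL(2, R)) : Matrix (Fin 2) (Fin 2) R) = (tr A) • 1 - A := by
  rw [coe_inv, adjugate_fin_two]
  ext i j
  fin_cases i <;> fin_cases j <;> simp [trace_fin_two]

theorem sq_fin_two_eq_trace_smul_sub_one :
    (A : Matrix (Fin 2) (Fin 2) R) ^ 2 = (tr A) • (A : Matrix (Fin 2) (Fin 2) R) - 1 := by
  have h : ((A⁻¹ : SL(2, R)) : Matrix (Fin 2) (Fin 2) R) * A = 1 := by
    rw [← coe_mul, inv_mul_cancel, coe_one]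
  rw [coe_inv_fin_two_eq_trace_smul_sub, sub_mul, smul_one_mul] at h
  rw [← h, sq, sub_sub_cancel]

theorem trace_inv_mul_fin_two :
    tr (A⁻¹ * B) = tr A * tr B - tr (A * B) := by
  rw [coe_mul, coe_mul, coe_inv_fin_two_eq_trace_smul_sub, sub_mul, smul_one_mul, trace_sub,
    trace_smul, smul_eq_mul]

theorem trace_inv_fin_two : tr A⁻¹ = tr A := by
  rw [coe_inv_fin_two_eq_trace_smul_sub, trace_sub, trace_smul, trace_one, Fintype.card_fin,
    smul_eq_mul]
  ring

theorem trace_sq_mul_fin_two : tr (A ^ 2 * B) = tr A * tr (A * B) - tr B := by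
  rw [coe_mul, coe_pow, sq_fin_two_eq_trace_smul_sub_one, sub_mul, smul_mul_assoc, one_mul,
    trace_sub, trace_smul, smul_eq_mul, coe_mul]

theorem trace_sq_fin_two : tr (A ^ 2) = tr A ^ 2 - 2 := by
  simpa [sq] using trace_sq_mul_fin_two A 1

theorem trace_commutator_fin_two :
    tr (A * B * A⁻¹ * B⁻¹) =
      tr A ^ 2 + tr B ^ 2 + tr (A * B) ^ 2 - tr A * tr B * tr (A * B) - 2 := by
  have hBA : tr (B * A) = tr (A * B) := trace_coe_mul_comm B A
  have hBAAB : tr (B * A * (A * B)) = tr (A ^ 2 * B ^ 2) := by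
    rw [mul_assoc, trace_coe_mul_comm, sq, sq]
    simp only [mul_assoc]
  have hA2B2 : tr (A ^ 2 * B ^ 2) = tr A * (tr B * tr (A * B) - tr A) - (tr B ^ 2 - 2) := by
    rw [trace_sq_mul_fin_two, trace_sq_fin_two, trace_coe_mul_comm A, trace_sq_mul_fin_two, hBA]
  calc tr (A * B * A⁻¹ * B⁻¹) = tr ((B * A)⁻¹ * (A * B)) := by
        rw [show A * B * A⁻¹ * B⁻¹ = A * B * (B * A)⁻¹ by group, coe_mul, coe_mul (B * A)⁻¹,
          trace_mul_comm]
    _ = _ := by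
        rw [trace_inv_mul_fin_two, hBA, hBAAB, hA2B2]
        ring

theorem trace_inv_sq_commutator_fin_two (x y : SL(2, R)) :
    tr (x⁻¹ ^ 2 * y⁻¹ * x ^ 2 * y) =
      tr x ^ 4 - tr x ^ 3 * tr y * tr (x * y) + tr x ^ 2 * tr y ^ 2 + tr x ^ 2 * tr (x * y) ^ 2 -
        4 * tr x ^ 2 + 2 := by
  have hc : x⁻¹ ^ 2 * y⁻¹ * x ^ 2 * y = x⁻¹ ^ 2 * y⁻¹ * (x⁻¹ ^ 2)⁻¹ * y⁻¹⁻¹ := by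
    rw [inv_pow, inv_inv, inv_inv]
  have hA : tr (x⁻¹ ^ 2) = tr x ^ 2 - 2 := by
    rw [inv_pow, trace_inv_fin_two, trace_sq_fin_two]
  have hAB : tr (x⁻¹ ^ 2 * y⁻¹) = tr x * tr (x * y) - tr y := by
    rw [inv_pow, ← _root_.mul_inv_rev, trace_inv_fin_two, trace_coe_mul_comm, trace_sq_mul_fin_two]
  rw [hc, trace_commutator_fin_two, hA, trace_inv_fin_two, hAB]
  ring

end Matrix.SpecialLinearGroup

theorem trace_commutator {K : Type*} [Field K]
    (x y : Matrix.SpecialLinearGroup (Fin 2) K)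
    (s t u : K) (hs : s = (x : Matrix (Fin 2) (Fin 2) K).trace)
    (ht : t = (y : Matrix (Fin 2) (Fin 2) K).trace)
    (hu : u = ((x * y : Matrix.SpecialLinearGroup (Fin 2) K) : Matrix (Fin 2) (Fin 2) K).trace) :
    ((x⁻¹ ^ 2 * y⁻¹ * x ^ 2 * y : Matrix.SpecialLinearGroup (Fin 2) K) :
        Matrix (Fin 2) (Fin 2) K).trace =
      s ^ 4 - s ^ 3 * t * u + s ^ 2 * t ^ 2 + s ^ 2 * u ^ 2 - 4 * s ^ 2 + 2 := by
  subst hs ht hu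
  exact Matrix.SpecialLinearGroup.trace_inv_sq_commutator_fin_two x y
end

section
/- Let ℓ be an odd prime, ζ a primitive ℓ-th root of unity, and p ≠ ℓ a prime. If P is a prime ideal of ℤ[ζ + ζ⁻¹] above p with residue field 𝔽_{p^m} where m > 1, then for every 1 ≤ i ≤ (ℓ−1)/2, the image of ζⁱ + ζ⁻ⁱ in 𝔽_{p^m} generates 𝔽_{p^m} over 𝔽_p. -/
/-!
Write `ℓ = 2k + 1` and `F = R/P`. Since `X² - (ζʲ + ζ⁻ʲ)X + 1 = (X - ζʲ)(X - ζ⁻ʲ)` divides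
`X^ℓ - 1` already over `R`, in an algebraic closure of `F` the residues of `ζ + ζ⁻¹` and
`ζⁱ + ζ⁻ⁱ` are `y₁ + y₁⁻¹` and `y + y⁻¹` with `y, y₁` of exact order `ℓ` (as `p ≠ ℓ`, `X^ℓ - 1`
is separable, so neither is `1`). Because `(y + y⁻¹)^q = y^q + y^(-q)` for `q = pⁿ`, such an
element is fixed by the `n`-th power of Frobenius iff `q ≡ ±1 mod ℓ`, which does not depend on
`y`. An element of a finite field generates it iff every power of Frobenius fixing it fixes the
whole field, and the residue of `ζ + ζ⁻¹` generates `F` because `ζ + ζ⁻¹` generates `R`.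
-/

open Polynomial

namespace Subring

variable {R : Type*} [Ring R]

theorem closure_closure_coe_preimage {s : Set R} :
    closure (((↑) : closure s → R) ⁻¹' s) = ⊤ :=
  eq_top_iff.2 fun x _ ↦ Subtype.recOn x fun _ hx' ↦
    closure_induction (fun _ h ↦ subset_closure h) (zero_mem _) (one_mem _)
      (fun _ _ _ _ ↦ add_mem) (fun _ _ ↦ neg_mem) (fun _ _ _ _ ↦ mul_mem) hx'

theorem closure_singleton_self_eq_top (x : R) :
    closure {(⟨x, subset_closure rfl⟩ : closure {x})} = ⊤ := by
  have hpre : ((↑) : closure {x} → R) ⁻¹' {x} = {⟨x, subset_closure rfl⟩} := by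
    ext
    simp [Subtype.ext_iff]
  rw [← hpre]
  exact closure_closure_coe_preimage

theorem closure_singleton_eq_top_of_surjective {S : Type*} [Ring S] {f : R →+* S}
    (hf : Function.Surjective f) {x : R} (hx : closure {x} = ⊤) : closure {f x} = ⊤ := by
  rw [← Set.image_singleton, ← RingHom.map_closure, hx, ← RingHom.range_eq_map,
    RingHom.range_eq_top]
  exact hf

end Subring

section Field

variable {K : Type*} [Field K]

theorem X_sq_sub_C_add_inv_mul_X_add_one {z : K} (hz : z ≠ 0) :
    (X ^ 2 - C (z + z⁻¹) * X + 1 : K[X]) = (X - C z) * (X - C z⁻¹) := by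
  have : (1 : K[X]) = C z * C z⁻¹ := by rw [← C_mul, mul_inv_cancel₀ hz, C_1]
  rw [this, C_add]
  ring

theorem X_sq_sub_C_add_inv_mul_X_add_one_dvd {z : K} (hz : z ≠ 0) (hz2 : z ^ 2 ≠ 1) {n : ℕ}
    (hzn : z ^ n = 1) : (X ^ 2 - C (z + z⁻¹) * X + 1 : K[X]) ∣ X ^ n - 1 := by
  have hne : z - z⁻¹ ≠ 0 := fun h ↦ hz2 (by
    rw [sq]
    nth_rw 1 [sub_eq_zero.1 h]
    exact inv_mul_cancel₀ hz)
  rw [X_sq_sub_C_add_inv_mul_X_add_one hz]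
  refine (isCoprime_X_sub_C_of_isUnit_sub hne.isUnit).mul_dvd ?_ ?_ <;>
    rw [dvd_iff_isRoot] <;> simp [hzn, inv_pow]

theorem IsPrimitiveRoot.X_sq_sub_C_mul_X_add_one_dvd {ζ : K} {k i : ℕ}
    (hζ : IsPrimitiveRoot ζ (2 * k + 1)) (hi1 : 1 ≤ i) (hik : i ≤ k) {R : Subring K} {a : R}
    (ha : (a : K) = ζ ^ i + (ζ ^ i)⁻¹) : (X ^ 2 - C a * X + 1 : R[X]) ∣ X ^ (2 * k + 1) - 1 := by
  have hζi : ζ ^ i ≠ 0 := pow_ne_zero _ (hζ.ne_zero (by omega))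
  have hζi2 : (ζ ^ i) ^ 2 ≠ 1 := by
    rw [← pow_mul, Ne, hζ.pow_eq_one_iff_dvd]
    exact fun h ↦ absurd (Nat.le_of_dvd (by omega) h) (by omega)
  have hmonic : (X ^ 2 - C a * X + 1 : R[X]).Monic := by monicity!
  rw [← map_dvd_map R.subtype Subtype.coe_injective hmonic]
  simpa [ha] using X_sq_sub_C_add_inv_mul_X_add_one_dvd hζi hζi2
    (by rw [← pow_mul, mul_comm, pow_mul, hζ.pow_eq_one, one_pow])

theorem add_inv_eq_add_inv_iff {u v : K} (hu : u ≠ 0) (hv : v ≠ 0) :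
    u + u⁻¹ = v + v⁻¹ ↔ u = v ∨ u = v⁻¹ := by
  have key : (u - v) * (u - v⁻¹) = u * (u + u⁻¹ - (v + v⁻¹)) := by
    field_simp
    ring
  rw [← sub_eq_zero, ← mul_eq_zero_iff_left hu, ← key, mul_eq_zero, sub_eq_zero, sub_eq_zero]

theorem pow_add_inv_pow_eq_add_inv_iff {y : K} (hy : y ≠ 0) {N : ℕ} (hN : N ≠ 0) :
    y ^ N + (y ^ N)⁻¹ = y + y⁻¹ ↔ orderOf y ∣ N - 1 ∨ orderOf y ∣ N + 1 := by
  have hfix : y ^ N = y ↔ y ^ (N - 1) = 1 := by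
    conv_lhs => rw [← Nat.sub_add_cancel (Nat.one_le_iff_ne_zero.2 hN), pow_succ]
    exact mul_eq_right₀ hy
  rw [add_inv_eq_add_inv_iff (pow_ne_zero _ hy) hy, orderOf_dvd_iff_pow_eq_one,
    orderOf_dvd_iff_pow_eq_one, hfix, pow_succ, mul_eq_one_iff_eq_inv₀ hy]

theorem add_inv_pow_expChar_pow_eq_iff (p : ℕ) [ExpChar K p] {y : K} (hy : y ≠ 0) (n : ℕ) :
    (y + y⁻¹) ^ p ^ n = y + y⁻¹ ↔ orderOf y ∣ p ^ n - 1 ∨ orderOf y ∣ p ^ n + 1 := by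
  rw [add_pow_expChar_pow, inv_pow,
    pow_add_inv_pow_eq_add_inv_iff hy (pow_ne_zero _ (expChar_pos K p).ne')]

end Field

theorem exists_orderOf_eq_and_map_eq_add_inv {R E : Type*} [CommRing R] [Field E]
    [IsAlgClosed E] (f : R →+* E) {ℓ : ℕ} (hℓ : ℓ.Prime) (hℓE : (ℓ : E) ≠ 0) {b : R}
    (h : X ^ 2 - C b * X + 1 ∣ X ^ ℓ - 1) : ∃ y : E, y ≠ 0 ∧ orderOf y = ℓ ∧ f b = y + y⁻¹ := by
  have := Fact.mk hℓ
  replace h : X ^ 2 - C (f b) * X + 1 ∣ X ^ ℓ - 1 := by simpa using Polynomial.map_dvd f h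
  obtain ⟨y, hy⟩ := IsAlgClosed.exists_root (X ^ 2 - C (f b) * X + 1) (by
    rw [show (X ^ 2 - C (f b) * X + 1 : E[X]).degree = 2 by compute_degree!]
    exact two_ne_zero)
  have hroot : y ^ 2 - f b * y + 1 = 0 := by simpa using hy
  have hy0 : y ≠ 0 := by rintro rfl; simp at hroot
  have hb : f b = y + y⁻¹ := by
    field_simp
    linear_combination -hroot
  rw [hb, X_sq_sub_C_add_inv_mul_X_add_one hy0] at h
  refine ⟨y, hy0, orderOf_eq_prime ?_ ?_, hb⟩
  · simpa [sub_eq_zero] using dvd_iff_isRoot.1 ((dvd_mul_right _ _).trans h)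
  · rintro rfl
    have hsep : (X ^ ℓ - C 1 : E[X]).Separable := separable_X_pow_sub_C 1 hℓE one_ne_zero
    rw [C_1, inv_one] at *
    exact not_isUnit_X_sub_C 1 (hsep.squarefree _ h)

theorem FiniteField.closure_singleton_eq_top_iff {F : Type*} [Field F] [Fintype F] {p : ℕ}
    [Fact p.Prime] [CharP F p] (x : F) :
    Subring.closure {x} = ⊤ ↔ ∀ n : ℕ, x ^ p ^ n = x → ∀ z : F, z ^ p ^ n = z := by
  constructor
  · intro hx n hxn z
    have hfixed := RingHom.eqOn_set_closure (f := iterateFrobenius F p n) (g := RingHom.id F)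
      (s := {x}) (by simpa [iterateFrobenius_def] using hxn)
    rw [hx] at hfixed
    simpa [iterateFrobenius_def] using hfixed (Subring.mem_top z)
  · intro h
    set S := Subring.closure {x}
    let : Fintype S := Fintype.ofFinite S
    let : Field S := (Finite.isField_of_domain S).toField
    obtain ⟨e, -, hS⟩ := FiniteField.card S p
    have hfix := h e (by
      simpa [hS] using
        congrArg Subtype.val (FiniteField.pow_card (⟨x, Subring.subset_closure rfl⟩ : S)))
    have hcard : Fintype.card F ≤ Fintype.card S := by
      have hp := (Fact.out : p.Prime).one_lt
      rw [hS, ← FiniteField.X_pow_card_pow_sub_X_natDegree_eq F e.ne_zero hp]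
      refine card_le_degree_of_subset_roots fun z _ ↦ ?_
      rw [mem_roots (FiniteField.X_pow_card_pow_sub_X_ne_zero F e.ne_zero hp)]
      simp [hfix z]
    rw [Subring.eq_top_iff']
    by_contra! ⟨z, hz⟩
    exact hcard.not_gt (Fintype.card_subtype_lt (p := (· ∈ S)) hz)

theorem closure_add_inv_eq_top_of_orderOf_eq {F E : Type*} [Field F] [Fintype F] [Field E]
    [Algebra F E] {p : ℕ} [Fact p.Prime] [CharP F p] {b b₁ : F} {y y₁ : E} (hy : y ≠ 0)
    (hy₁ : y₁ ≠ 0) (horder : orderOf y = orderOf y₁) (hb : algebraMap F E b = y + y⁻¹)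
    (hb₁ : algebraMap F E b₁ = y₁ + y₁⁻¹) (hgen : Subring.closure {b₁} = ⊤) :
    Subring.closure {b} = ⊤ := by
  have := expChar_of_injective_algebraMap (algebraMap F E).injective p
  rw [FiniteField.closure_singleton_eq_top_iff] at hgen ⊢
  intro n hbn
  refine hgen n ((algebraMap F E).injective ?_)
  rw [map_pow, hb₁, add_inv_pow_expChar_pow_eq_iff p hy₁, ← horder,
    ← add_inv_pow_expChar_pow_eq_iff p hy, ← hb, ← map_pow, hbn]

theorem residue_generates_general (k : ℕ) (hprime : (2 * k + 1).Prime)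
    (ζ : ℂ) (hζ : IsPrimitiveRoot ζ (2 * k + 1))
    (p : ℕ) (hp : p.Prime) (hpl : p ≠ 2 * k + 1)
    (P : Ideal (Subring.closure {ζ + ζ⁻¹} : Subring ℂ)) (hP : P.IsPrime)
    (hpP : (p : (Subring.closure {ζ + ζ⁻¹} : Subring ℂ)) ∈ P)
    [Fintype ((Subring.closure {ζ + ζ⁻¹} : Subring ℂ) ⧸ P)]
    (i : ℕ) (hi1 : 1 ≤ i) (hik : i ≤ k)
    (a : (Subring.closure {ζ + ζ⁻¹} : Subring ℂ)) (ha : (a : ℂ) = ζ ^ i + (ζ ^ i)⁻¹) :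
    Subring.closure {Ideal.Quotient.mk P a} = ⊤ := by
  have := Fact.mk hp
  let : Field (_ ⧸ P) := (Finite.isField_of_domain _).toField
  have : CharP (_ ⧸ P) p := (CharP.charP_iff_prime_eq_zero hp).2 (by
    simpa using Ideal.Quotient.eq_zero_iff_mem.2 hpP)
  let ψ := (algebraMap (_ ⧸ P) (AlgebraicClosure (_ ⧸ P))).comp (Ideal.Quotient.mk P)
  have hℓ : ((2 * k + 1 : ℕ) : AlgebraicClosure (_ ⧸ P)) ≠ 0 := by
    rw [Ne, CharP.cast_eq_zero_iff _ p, Nat.prime_dvd_prime_iff_eq hp hprime]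
    exact hpl
  obtain ⟨y, hy0, hy, hya⟩ := exists_orderOf_eq_and_map_eq_add_inv ψ hprime hℓ
    (hζ.X_sq_sub_C_mul_X_add_one_dvd hi1 hik ha)
  obtain ⟨y₁, hy₁0, hy₁, hy₁g⟩ := exists_orderOf_eq_and_map_eq_add_inv ψ hprime hℓ
    (hζ.X_sq_sub_C_mul_X_add_one_dvd le_rfl (hi1.trans hik)
      (a := (⟨ζ + ζ⁻¹, Subring.subset_closure rfl⟩ : Subring.closure {ζ + ζ⁻¹})) (by simp))
  exact closure_add_inv_eq_top_of_orderOf_eq hy0 hy₁0 (hy.trans hy₁.symm) hya hy₁g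
    (Subring.closure_singleton_eq_top_of_surjective Ideal.Quotient.mk_surjective
      (Subring.closure_singleton_self_eq_top _))

theorem residue_generates (k : ℕ) (hk : 1 ≤ k) (hprime : (2 * k + 1).Prime)
    (ζ : ℂ) (hζ : IsPrimitiveRoot ζ (2 * k + 1))
    (p : ℕ) (hp : p.Prime) (hpl : p ≠ 2 * k + 1)
    (P : Ideal (Subring.closure {ζ + ζ⁻¹} : Subring ℂ)) (hP : P.IsPrime)
    (hpP : (p : (Subring.closure {ζ + ζ⁻¹} : Subring ℂ)) ∈ P)
    (m : ℕ) (hm : 1 < m)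
    [Fintype ((Subring.closure {ζ + ζ⁻¹} : Subring ℂ) ⧸ P)]
    (hcard : Fintype.card ((Subring.closure {ζ + ζ⁻¹} : Subring ℂ) ⧸ P) = p ^ m)
    (i : ℕ) (hi1 : 1 ≤ i) (hik : i ≤ k)
    (a : (Subring.closure {ζ + ζ⁻¹} : Subring ℂ)) (ha : (a : ℂ) = ζ ^ i + (ζ ^ i)⁻¹) :
    Subring.closure {Ideal.Quotient.mk P a} = ⊤ :=
  residue_generates_general k hprime ζ hζ p hp hpl P hP hpP i hi1 hik a ha
end
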